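/- arXiv:2510.03492 — 3 statements merged into one kernel-verified Lean document; each statement's English description precedes it below -/
import Mathlib

section
/- Let Γ be a finitely generated mixed identity free group. Then for every finite collection w₁, …, w_k of nontrivial elements of Γ∗⟨x⟩ there exists a single element γ ∈ Γ such that w_i(γ) ≠ 1 for every i = 1, …, k. -/
open Matrix

/-- The free product `Γ ∗ ⟨x⟩` of a group `Γ` with an infinite cyclic group `⟨x⟩`. -/
abbrev MixedWordGroup (G : Type*) [Group G] : Type _ :=
  Monoid.Coprod G (Multiplicative ℤ)

/-- The distinguished generator `x` of the free factor `⟨x⟩` in `Γ ∗ ⟨x⟩`. -/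
def xGen (G : Type*) [Group G] : MixedWordGroup G :=
  Monoid.Coprod.inr (Multiplicative.ofAdd (1 : ℤ))

/-- Evaluation of a mixed word: the unique homomorphism `Γ ∗ ⟨x⟩ → Γ` restricting to the
identity on `Γ` and sending `x` to `γ`. -/
def evalWord {G : Type*} [Group G] (γ : G) : MixedWordGroup G →* G :=
  Monoid.Coprod.lift (MonoidHom.id G) (zpowersHom G γ)

/-- Word length of `g` with respect to the set `S`. -/
noncomputable def wordLength {G : Type*} [Group G] (S : Set G) (g : G) : ℕ :=
  sInf {n | ∃ l : List G, (∀ a ∈ l, a ∈ S) ∧ l.length = n ∧ l.prod = g}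

/-- The generating set `X ∪ {x, x⁻¹}` of `Γ ∗ ⟨x⟩`. -/
def mixedGenSet {G : Type*} [Group G] (X : Set G) : Set (MixedWordGroup G) :=
  (Monoid.Coprod.inl '' X) ∪ {xGen G, (xGen G)⁻¹}


/-!
In `Γ ∗ ⟨x⟩` with `Γ ≠ 1`, the normal closures of two nontrivial elements meet nontrivially.
Indeed, after conjugating and inverting, each normal closure contains an element whose reduced
word begins and ends with a letter of `Γ`; for two such elements `a` and `b`, the commutator
`⁅a, x b x⁻¹⁆` is again a nonempty reduced word, hence nontrivial. So the nontrivial words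
`w₁, …, w_k` have a common nontrivial element `z` in their normal closures, and a `γ` with
`z(γ) ≠ 1`, given by mixed identity freeness, cannot kill any `wᵢ`. That `Γ ≠ 1` also follows
from mixed identity freeness, applied to the word `x`.
-/

open Monoid Subgroup
open scoped commutatorElement

theorem Subgroup.mem_normalClosure_singleton_of_mem {H : Type*} [Group H] {u z : H}
    (hz : z ∈ normalClosure {u}) {N : Subgroup H} [N.Normal] (hu : u ∈ N) : z ∈ N :=
  normalClosure_le_normal (Set.singleton_subset_iff.2 hu) hz

theorem Subgroup.map_mem_normalClosure_singleton {H K : Type*} [Group H] [Group K] (f : H →* K)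
    {u z : H} (hz : z ∈ normalClosure {u}) : f z ∈ normalClosure {f u} :=
  mem_normalClosure_singleton_of_mem (N := (normalClosure {f u}).comap f) hz
    (subset_normalClosure rfl)

theorem exists_ne_one_forall_mem_normalClosure {H : Type*} [Group H] [Nontrivial H]
    (hH : ∀ u v : H, u ≠ 1 → v ≠ 1 → ∃ z ≠ 1, z ∈ normalClosure {u} ∧ z ∈ normalClosure {v})
    {ι : Type*} [Finite ι] (w : ι → H) (hw : ∀ i, w i ≠ 1) :
    ∃ z ≠ 1, ∀ i, z ∈ normalClosure {w i} := by
  classical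
  have := Fintype.ofFinite ι
  suffices ∀ s : Finset ι, ∃ z ≠ 1, ∀ i ∈ s, z ∈ normalClosure {w i} by
    simpa using this Finset.univ
  intro s
  induction s using Finset.induction_on with
  | empty => simpa using exists_ne (1 : H)
  | insert i s _ ih =>
    obtain ⟨z, hz, hzs⟩ := ih
    obtain ⟨y, hy, hyi, hyz⟩ := hH (w i) z (hw i) hz
    refine ⟨y, hy, Finset.forall_mem_insert _ _ _ |>.2 ⟨hyi, fun j hj => ?_⟩⟩
    exact mem_normalClosure_singleton_of_mem hyz (hzs j hj)

namespace Monoid.CoprodI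

section Words

variable {ι : Type*} {M : ι → Type*} [∀ i, Group (M i)]

def HasReducedForm (x : CoprodI M) (i j : ι) : Prop :=
  ∃ W : NeWord M i j, W.prod = x

theorem NeWord.prod_ne_one {i j : ι} (W : NeWord M i j) : W.prod ≠ 1 := by
  classical
  intro h
  have hW : W.toWord = Word.empty :=
    Word.equiv.symm.injective (h.trans Word.prod_empty.symm)
  exact W.toList_ne_nil (congrArg Word.toList hW)

theorem HasReducedForm.ne_one {x : CoprodI M} {i j : ι} (h : HasReducedForm x i j) : x ≠ 1 := by
  obtain ⟨W, rfl⟩ := h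
  exact W.prod_ne_one

theorem exists_hasReducedForm_of_ne_one {x : CoprodI M} (hx : x ≠ 1) :
    ∃ i j, HasReducedForm x i j := by
  classical
  have hne : Word.equiv x ≠ Word.empty := fun h =>
    hx (by rw [← Word.equiv.symm_apply_apply x, h]; exact Word.prod_empty)
  obtain ⟨i, j, W, hW⟩ := NeWord.of_word _ hne
  exact ⟨i, j, W, by rw [NeWord.prod, hW]; exact Word.equiv.symm_apply_apply x⟩

theorem HasReducedForm.inv {x : CoprodI M} {i j : ι} (h : HasReducedForm x i j) :
    HasReducedForm x⁻¹ j i := by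
  obtain ⟨W, rfl⟩ := h
  exact ⟨W.inv, W.inv_prod⟩

theorem HasReducedForm.conj_of {x : CoprodI M} {i j : ι} (h : HasReducedForm x j j) (hij : i ≠ j)
    {g : M i} (hg : g ≠ 1) : HasReducedForm (of g * x * (of g)⁻¹) i i := by
  obtain ⟨W, rfl⟩ := h
  refine ⟨((NeWord.singleton g hg).append hij W).append hij.symm
    (NeWord.singleton g⁻¹ (inv_ne_one.2 hg)), ?_⟩
  simp

theorem NeWord.hasReducedForm_conj_of {i j : ι} (W : NeWord M j i) (hij : i ≠ j) {y : M j}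
    (hy : y ≠ 1) (hyW : y * W.head ≠ 1) : HasReducedForm (of y * W.prod * (of y)⁻¹) j j :=
  ⟨(W.mulHead y hyW).append hij (NeWord.singleton y⁻¹ (inv_ne_one.2 hy)), by simp⟩

theorem HasReducedForm.commutator {a c : CoprodI M} {i j : ι} (ha : HasReducedForm a i i)
    (hc : HasReducedForm c j j) (hij : i ≠ j) : HasReducedForm ⁅a, c⁆ i j := by
  obtain ⟨A, rfl⟩ := ha
  obtain ⟨C, rfl⟩ := hc
  refine ⟨((A.append hij C).append hij.symm A.inv).append hij C.inv, ?_⟩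
  simp [commutatorElement_def]

end Words

section FreeProductOfTwo

variable {M : Bool → Type*} [∀ b, Group (M b)] [Nontrivial (M true)] [Infinite (M false)]

theorem exists_mem_normalClosure_hasReducedForm_true_true {u : CoprodI M} (hu : u ≠ 1) :
    ∃ a ∈ normalClosure {u}, HasReducedForm a true true := by
  have hN : (normalClosure {u}).Normal := normalClosure_normal
  have hu_mem : u ∈ normalClosure {u} := subset_normalClosure rfl
  have of_false_false : ∀ x ∈ normalClosure {u}, HasReducedForm x false false →
      ∃ a ∈ normalClosure {u}, HasReducedForm a true true := fun x hx h => by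
    obtain ⟨g, hg⟩ := exists_ne (1 : M true)
    exact ⟨_, hN.conj_mem x hx (of g), h.conj_of Bool.false_ne_true.symm hg⟩
  have of_false_true : ∀ x ∈ normalClosure {u}, HasReducedForm x false true →
      ∃ a ∈ normalClosure {u}, HasReducedForm a true true := fun x hx h => by
    classical
    obtain ⟨W, rfl⟩ := h
    -- `y ∉ {1, W.head⁻¹}` conjugates `W` into a `(false, false)` word without cancellation
    obtain ⟨y, hy⟩ := Infinite.exists_notMem_finset ({1, W.head⁻¹} : Finset (M false))
    simp only [Finset.mem_insert, Finset.mem_singleton, not_or, ← mul_eq_one_iff_eq_inv] at hy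
    exact of_false_false _ (hN.conj_mem _ hx (of y))
      (W.hasReducedForm_conj_of Bool.false_ne_true.symm hy.1 hy.2)
  obtain ⟨i, j, h⟩ := exists_hasReducedForm_of_ne_one hu
  cases i <;> cases j
  · exact of_false_false u hu_mem h
  · exact of_false_true u hu_mem h
  · exact of_false_true u⁻¹ (inv_mem hu_mem) h.inv
  · exact ⟨u, hu_mem, h⟩

theorem exists_ne_one_mem_normalClosure_inf {u v : CoprodI M} (hu : u ≠ 1) (hv : v ≠ 1) :
    ∃ z ≠ 1, z ∈ normalClosure {u} ∧ z ∈ normalClosure {v} := by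
  obtain ⟨a, ha, hA⟩ := exists_mem_normalClosure_hasReducedForm_true_true hu
  obtain ⟨b, hb, hB⟩ := exists_mem_normalClosure_hasReducedForm_true_true hv
  obtain ⟨y, hy⟩ := exists_ne (1 : M false)
  have hc : of y * b * (of y)⁻¹ ∈ normalClosure {v} := normalClosure_normal.conj_mem b hb _
  exact ⟨_, (hA.commutator (hB.conj_of Bool.false_ne_true hy) Bool.false_ne_true.symm).ne_one,
    commutator_le_inf _ _ (commutator_mem_commutator ha hc)⟩

end FreeProductOfTwo

end Monoid.CoprodI

namespace MixedWordGroup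

universe u

variable {G : Type u} [Group G]

/-- `Γ ∗ ⟨x⟩` as a `Bool`-indexed free product; `⟨x⟩` is lifted to the universe of `Γ`. -/
def Factor (G : Type u) [Group G] : Bool → Type u
  | true => G
  | false => ULift (Multiplicative ℤ)

instance : ∀ b, Group (Factor G b)
  | true => inferInstanceAs (Group G)
  | false => inferInstanceAs (Group (ULift (Multiplicative ℤ)))

instance [Nontrivial G] : Nontrivial (Factor G true) := inferInstanceAs (Nontrivial G)

instance : Infinite (Factor G false) := inferInstanceAs (Infinite (ULift (Multiplicative ℤ)))

def toCoprodI : MixedWordGroup G →* CoprodI (Factor G) :=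
  Coprod.lift (CoprodI.of (M := Factor G) (i := true))
    ((CoprodI.of (M := Factor G) (i := false)).comp MulEquiv.ulift.symm.toMonoidHom)

def factorHom : ∀ b, Factor G b →* MixedWordGroup G
  | true => Coprod.inl
  | false => Coprod.inr.comp MulEquiv.ulift.toMonoidHom

def mulEquivCoprodI : MixedWordGroup G ≃* CoprodI (Factor G) :=
  toCoprodI.toMulEquiv (CoprodI.lift factorHom)
    (Coprod.hom_ext (MonoidHom.ext fun _ => CoprodI.lift_of _ _)
      (MonoidHom.ext fun _ => CoprodI.lift_of _ _))
    (CoprodI.ext_hom _ _ fun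
      | true => MonoidHom.ext fun g => by
        simp only [MonoidHom.comp_apply, CoprodI.lift_of, MonoidHom.id_apply]
        exact Coprod.lift_apply_inl _ _ g
      | false => MonoidHom.ext fun n => by
        simp only [MonoidHom.comp_apply, CoprodI.lift_of, MonoidHom.id_apply]
        exact Coprod.lift_apply_inr _ _ n.down)

theorem exists_ne_one_mem_normalClosure_inf [Nontrivial G] {u v : MixedWordGroup G} (hu : u ≠ 1)
    (hv : v ≠ 1) : ∃ z ≠ 1, z ∈ normalClosure {u} ∧ z ∈ normalClosure {v} := by
  let e : MixedWordGroup G ≃* CoprodI (Factor G) := mulEquivCoprodI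
  obtain ⟨z, hz, hzu, hzv⟩ := CoprodI.exists_ne_one_mem_normalClosure_inf
    ((map_ne_one_iff e e.injective).2 hu) ((map_ne_one_iff e e.injective).2 hv)
  refine ⟨e.symm z, (map_ne_one_iff _ e.symm.injective).2 hz, ?_, ?_⟩
  · simpa using map_mem_normalClosure_singleton e.symm.toMonoidHom hzu
  · simpa using map_mem_normalClosure_singleton e.symm.toMonoidHom hzv

theorem evalWord_xGen (γ : G) : evalWord γ (xGen G) = γ := by
  simp [evalWord, xGen]

theorem xGen_ne_one : xGen G ≠ 1 :=
  (map_ne_one_iff _ Coprod.inr_injective).2 (by decide)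

end MixedWordGroup

theorem stmt4_general {G : Type*} [Group G]
    (hMIF : ∀ w : MixedWordGroup G, w ≠ 1 → ∃ γ : G, evalWord γ w ≠ 1)
    (k : ℕ) (w : Fin k → MixedWordGroup G) (hw : ∀ i, w i ≠ 1) :
    ∃ γ : G, ∀ i, evalWord γ (w i) ≠ 1 := by
  have : Nontrivial G := by
    obtain ⟨γ, hγ⟩ := hMIF _ MixedWordGroup.xGen_ne_one
    exact nontrivial_of_ne γ 1 (by rwa [MixedWordGroup.evalWord_xGen] at hγ)
  have : Nontrivial (MixedWordGroup G) := Coprod.inl_injective.nontrivial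
  obtain ⟨z, hz, hzw⟩ := exists_ne_one_forall_mem_normalClosure
    (fun _ _ => MixedWordGroup.exists_ne_one_mem_normalClosure_inf) w hw
  obtain ⟨γ, hγ⟩ := hMIF z hz
  refine ⟨γ, fun i hi => hγ ?_⟩
  exact mem_normalClosure_singleton_of_mem (N := (evalWord γ).ker) (hzw i) hi

theorem stmt4 {G : Type*} [Group G] (hfg : Group.FG G)
    (hMIF : ∀ w : MixedWordGroup G, w ≠ 1 → ∃ γ : G, evalWord γ w ≠ 1)
    (k : ℕ) (w : Fin k → MixedWordGroup G) (hw : ∀ i, w i ≠ 1) :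
    ∃ γ : G, ∀ i, evalWord γ (w i) ≠ 1 :=
  stmt4_general hMIF k w hw
end

section
/- Let Γ be a mixed identity free group. Then Γ satisfies no nontrivial mixed identity in several variables: for every m ≥ 1 and every nontrivial element w of the free product Γ ∗ F_m, where F_m is the free group on generators x₁, …, x_m, there exist elements γ₁, …, γ_m ∈ Γ such that the image of w under the homomorphism Γ ∗ F_m → Γ restricting to the identity on Γ and sending x_i to γ_i is nontrivial. -/
open Matrix

/-- The free product `Γ ∗ F_m` of a group `Γ` with the free group on `m` generators. -/
abbrev MultiMixedWordGroup (G : Type*) [Group G] (m : ℕ) : Type _ :=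
  Monoid.Coprod G (FreeGroup (Fin m))

/-- Evaluation of a word in `Γ ∗ F_m`: the unique homomorphism `Γ ∗ F_m → Γ` restricting to
the identity on `Γ` and sending the generator `xᵢ` to `γ i`. -/
def evalMultiWord {G : Type*} [Group G] {m : ℕ} (γ : Fin m → G) :
    MultiMixedWordGroup G m →* G :=
  Monoid.Coprod.lift (MonoidHom.id G) (FreeGroup.lift γ)

/-!
Since `Γ` is mixed identity free, it is nontrivial (apply the hypothesis to `w = x`); fix
`h ≠ 1` in `Γ`. The substitution `xᵢ ↦ x^(i+1) h x^(i+1)` is an injective homomorphism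
`Γ ∗ F_m → Γ ∗ ⟨x⟩` fixing `Γ`, so a nontrivial `w ∈ Γ ∗ F_m` becomes a nontrivial mixed word
in one variable. Some `γ ∈ Γ` does not satisfy it, and `γᵢ := γ^(i+1) h γ^(i+1)` then witness
that `w` is not a mixed identity.

Injectivity is a ping-pong argument for the action of `Γ ∗ ⟨x⟩` on reduced words: `Γ ∖ {1}`
sends words starting with a power of `x` to words starting with a letter of `Γ`, and every
nonzero power of `cᵢ = x^(i+1) h x^(i+1)` sends the words that do not start with `x^(±(i+1))`
to words that do. The letter `h` between consecutive `x`-powers never cancels, which is what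
makes torsion in `Γ` harmless.
-/

open Monoid CoprodI Function

universe u v

namespace Monoid.CoprodI.Word

variable {ι : Type*} {M : ι → Type*} [∀ i, Group (M i)] [DecidableEq ι] [∀ i, DecidableEq (M i)]

theorem fstIdx_of_smul_of_fstIdx_ne {i : ι} {x : M i} (hx : x ≠ 1) {w : Word M}
    (hw : w.fstIdx ≠ some i) : (of x • w).fstIdx = some i := by
  rw [← cons_eq_smul (h1 := hw) (h2 := hx), fstIdx_cons]

theorem fstIdx_eq_of_equivPair_head_ne_one {j : ι} {w : Word M}
    (hw : (equivPair j w).head ≠ 1) : w.fstIdx = some j := by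
  by_contra h
  exact hw (by rw [equivPair_eq_of_fstIdx_ne h])

theorem equivPair_head_of_smul {j : ι} (s : M j) (w : Word M) :
    (equivPair j (of s • w)).head = s * (equivPair j w).head := by
  rw [equivPair_smul_same]

section Sandwich

/- `(equivPair j w).head` is the first letter of the reduced word `w` if that letter lies in the
factor `j`, and `1` otherwise. -/

variable {i j : ι} {h : M i} {s : M j} {w : Word M}

theorem equivPair_head_sandwich_smul (hij : i ≠ j) (hh : h ≠ 1)
    (hw : (equivPair j w).head ≠ s⁻¹) :
    (equivPair j ((of s * of h * of s) • w)).head = s := by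
  have hsw : (equivPair j (of s • w)).head ≠ 1 := by
    rw [equivPair_head_of_smul]
    exact fun e => hw (eq_inv_of_mul_eq_one_right e)
  have hhsw : (of h • of s • w).fstIdx = some i :=
    fstIdx_of_smul_of_fstIdx_ne hh
      (by rw [fstIdx_eq_of_equivPair_head_ne_one hsw]; exact Option.some_injective _ |>.ne hij.symm)
  rw [mul_smul, mul_smul, equivPair_head_of_smul,
    equivPair_eq_of_fstIdx_ne (by rw [hhsw]; exact Option.some_injective _ |>.ne hij), mul_one]

theorem equivPair_head_sandwich_pow_succ_smul (hij : i ≠ j) (hh : h ≠ 1) (hs : s ≠ s⁻¹)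
    (hw : (equivPair j w).head ≠ s⁻¹) (n : ℕ) :
    (equivPair j ((of s * of h * of s) ^ (n + 1) • w)).head = s := by
  induction n with
  | zero => simpa using equivPair_head_sandwich_smul hij hh hw
  | succ n ih =>
    rw [pow_succ', mul_smul]
    exact equivPair_head_sandwich_smul hij hh (by rw [ih]; exact hs)

theorem equivPair_head_sandwich_zpow_smul (hij : i ≠ j) (hh : h ≠ 1) (hs : s ≠ s⁻¹)
    (hw : (equivPair j w).head ∉ ({s, s⁻¹} : Set (M j))) {n : ℤ} (hn : n ≠ 0) :
    (equivPair j ((of s * of h * of s) ^ n • w)).head ∈ ({s, s⁻¹} : Set (M j)) := by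
  simp only [Set.mem_insert_iff, Set.mem_singleton_iff, not_or] at hw
  obtain ⟨k, rfl | rfl⟩ := n.eq_nat_or_neg
  · obtain ⟨k, rfl⟩ := Nat.exists_eq_succ_of_ne_zero (n := k) (by rintro rfl; simp at hn)
    exact .inl (by exact_mod_cast equivPair_head_sandwich_pow_succ_smul hij hh hs hw.2 k)
  · obtain ⟨k, rfl⟩ := Nat.exists_eq_succ_of_ne_zero (n := k) (by rintro rfl; simp at hn)
    have hinv : (of s * of h * of s)⁻¹ = of s⁻¹ * of h⁻¹ * of s⁻¹ := by
      simp only [_root_.mul_inv_rev, map_inv, mul_assoc]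
    refine .inr ?_
    rw [_root_.zpow_neg, ← _root_.inv_zpow, hinv, zpow_natCast]
    exact equivPair_head_sandwich_pow_succ_smul hij (inv_ne_one.2 hh)
      (by rwa [inv_inv, ne_comm]) (by rw [inv_inv]; exact hw.1) k

end Sandwich

end Monoid.CoprodI.Word

section Factors

variable {G : Type u} {ι : Type v}

/- The free factors of `Γ ∗ ⟨x⟩` and of `Γ ∗ F(ι)`, so that both groups can be handled as indexed
free products `CoprodI`, which carry reduced words and the ping-pong lemma. `ULift` moves `ℤ` into
the universe of `Γ`. -/
def MixedFactor (G : Type u) : Bool → Type u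
  | true => G
  | false => ULift.{u} (Multiplicative ℤ)

def MultiMixedFactor (G : Type u) (ι : Type v) : Option ι → Type u
  | none => G
  | some _ => ULift.{u} (Multiplicative ℤ)

variable (G) in
def xLetter (k : ℤ) : MixedFactor G false := ULift.up (Multiplicative.ofAdd k)

theorem xLetter_injective : Injective (xLetter G) := fun _ _ h =>
  Multiplicative.ofAdd.injective (ULift.up_injective h)

variable [Group G]

instance : ∀ b, Group (MixedFactor G b)
  | true => inferInstanceAs (Group G)
  | false => inferInstanceAs (Group (ULift (Multiplicative ℤ)))

noncomputable instance : ∀ b, DecidableEq (MixedFactor G b) := fun _ => Classical.decEq _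

instance : ∀ o, Group (MultiMixedFactor G ι o)
  | none => inferInstanceAs (Group G)
  | some _ => inferInstanceAs (Group (ULift (Multiplicative ℤ)))

theorem xLetter_inv (k : ℤ) : (xLetter G k)⁻¹ = xLetter G (-k) := rfl

theorem xLetter_one_zpow (k : ℤ) : xLetter G 1 ^ k = xLetter G k := by
  change (ULift.up (Multiplicative.ofAdd 1) : ULift (Multiplicative ℤ)) ^ k = ULift.up _
  ext
  simp

theorem xLetter_ne_one {k : ℤ} (hk : k ≠ 0) : xLetter G k ≠ 1 :=
  (xLetter_injective (G := G)).ne hk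

def MixedWordGroup.toCoprodI_s5 : MixedWordGroup G →* CoprodI (MixedFactor G) :=
  Coprod.lift (of (M := MixedFactor G) (i := true))
    ((of (M := MixedFactor G) (i := false)).comp MulEquiv.ulift.symm.toMonoidHom)

theorem MixedWordGroup.toCoprodI_inl (g : G) :
    toCoprodI_s5 (Coprod.inl g) = of (M := MixedFactor G) (i := true) g :=
  Coprod.lift_apply_inl _ _ g

theorem MixedWordGroup.toCoprodI_xGen_zpow (k : ℤ) :
    toCoprodI_s5 (xGen G ^ k) = of (xLetter G k) := by
  have h1 : toCoprodI_s5 (xGen G) = of (xLetter G 1) := Coprod.lift_apply_inr _ _ _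
  rw [map_zpow, h1, ← map_zpow, xLetter_one_zpow]

def coprodFreeGroupToCoprodI : Coprod G (FreeGroup ι) →* CoprodI (MultiMixedFactor G ι) :=
  Coprod.lift (of (M := MultiMixedFactor G ι) (i := none))
    (FreeGroup.lift fun i => of (M := MultiMixedFactor G ι) (i := some i)
      (ULift.up (Multiplicative.ofAdd 1)))

theorem coprodFreeGroupToCoprodI_inl (g : G) :
    coprodFreeGroupToCoprodI (ι := ι) (Coprod.inl g) =
      of (M := MultiMixedFactor G ι) (i := none) g :=
  Coprod.lift_apply_inl _ _ g

theorem coprodFreeGroupToCoprodI_inr_of (i : ι) :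
    coprodFreeGroupToCoprodI (G := G) (Coprod.inr (FreeGroup.of i)) =
      of (M := MultiMixedFactor G ι) (i := some i) (ULift.up (Multiplicative.ofAdd 1)) :=
  (Coprod.lift_apply_inr _ _ _).trans (FreeGroup.lift_apply_of ..)

def coprodFreeGroupOfCoprodI : CoprodI (MultiMixedFactor G ι) →* Coprod G (FreeGroup ι) :=
  CoprodI.lift fun
    | none => Coprod.inl
    | some i => Coprod.inr.comp
        ((zpowersHom _ (FreeGroup.of i)).comp MulEquiv.ulift.toMonoidHom)

theorem coprodFreeGroupOfCoprodI_comp_toCoprodI :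
    coprodFreeGroupOfCoprodI.comp coprodFreeGroupToCoprodI =
      MonoidHom.id (Coprod G (FreeGroup ι)) := by
  ext g
  · show coprodFreeGroupOfCoprodI (coprodFreeGroupToCoprodI (Coprod.inl g)) = Coprod.inl g
    rw [coprodFreeGroupToCoprodI_inl]
    exact CoprodI.lift_of _ _
  · show coprodFreeGroupOfCoprodI (coprodFreeGroupToCoprodI (Coprod.inr (FreeGroup.of g))) = _
    rw [coprodFreeGroupToCoprodI_inr_of]
    exact (CoprodI.lift_of _ _).trans (congrArg Coprod.inr (zpow_one (FreeGroup.of g)))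

theorem coprodFreeGroupToCoprodI_injective :
    Injective (coprodFreeGroupToCoprodI (G := G) (ι := ι)) :=
  LeftInverse.injective (g := coprodFreeGroupOfCoprodI) fun x =>
    DFunLike.congr_fun coprodFreeGroupOfCoprodI_comp_toCoprodI x

end Factors

section PingPong

variable {G : Type u} [Group G] {ι : Type v} (h : G) (a : ι → ℕ)

open Word
open scoped Pointwise

def xSandwich (k : ℤ) : CoprodI (MixedFactor G) :=
  of (xLetter G k) * of (M := MixedFactor G) (i := true) h * of (xLetter G k)

def pingPongHom : ∀ o, MultiMixedFactor G ι o →* CoprodI (MixedFactor G)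
  | none => of (M := MixedFactor G) (i := true)
  | some i => (zpowersHom _ (xSandwich h (a i + 1))).comp MulEquiv.ulift.toMonoidHom

theorem pingPongHom_some_apply (i : ι) (x : MultiMixedFactor G ι (some i)) :
    pingPongHom h a (some i) x =
      xSandwich h (a i + 1) ^ Multiplicative.toAdd (MulEquiv.ulift x) :=
  rfl

def pingPongSet : Option ι → Set (Word (MixedFactor G))
  | none => {w | w.fstIdx = some true}
  | some i =>
    {w | (equivPair false w).head ∈ ({xLetter G (a i + 1), (xLetter G (a i + 1))⁻¹} : Set _)}

variable {h a}

theorem fstIdx_eq_of_mem_pingPongSet_some {i : ι} {w : Word (MixedFactor G)}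
    (hw : w ∈ pingPongSet a (some i)) : w.fstIdx = some false := by
  refine fstIdx_eq_of_equivPair_head_ne_one ?_
  intro h1
  rcases (show _ ∈ ({_, _} : Set _) from hw) with hw | hw <;> rw [h1] at hw
  · exact xLetter_ne_one (by omega) hw.symm
  · exact xLetter_ne_one (by omega) (inv_eq_one.1 hw.symm)

theorem pingPongSet_nonempty (hh : h ≠ 1) : ∀ o, (pingPongSet (G := G) a o).Nonempty
  | none => ⟨of (M := MixedFactor G) (i := true) h • .empty,
      fstIdx_of_smul_of_fstIdx_ne hh (by simp [fstIdx, Word.empty])⟩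
  | some i => ⟨of (xLetter G (a i + 1)) • .empty, .inl (by
      rw [equivPair_head_of_smul, equivPair_eq_of_fstIdx_ne (by simp [fstIdx, Word.empty]),
        mul_one])⟩

theorem pingPongSet_some_disjoint (ha : Injective a) {i j : ι} (hij : i ≠ j) :
    Disjoint (pingPongSet (G := G) a (some i)) (pingPongSet a (some j)) := by
  refine Set.disjoint_left.2 fun w hi hj => ?_
  simp only [pingPongSet, Set.mem_ofPred_eq, Set.mem_insert_iff, Set.mem_singleton_iff,
    xLetter_inv] at hi hj
  rcases hi with hi | hi <;> rcases hj with hj | hj <;>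
    have := xLetter_injective (hi.symm.trans hj) <;> exact hij (ha (by omega))

theorem pingPongSet_pairwise_disjoint (ha : Injective a) :
    Pairwise (Disjoint on pingPongSet (G := G) a) := by
  have none_some (i : ι) : Disjoint (pingPongSet (G := G) a none) (pingPongSet a (some i)) :=
    Set.disjoint_left.2 fun w hw hw' => by
      simpa [show w.fstIdx = some true from hw] using fstIdx_eq_of_mem_pingPongSet_some hw'
  rintro (_ | i) (_ | j) hne
  · exact absurd rfl hne
  · exact none_some j
  · exact (none_some i).symm
  · exact pingPongSet_some_disjoint ha fun e => hne (congrArg some e)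

theorem pingPongHom_smul_subset (ha : Injective a) (hh : h ≠ 1) :
    Pairwise fun o o' => ∀ x : MultiMixedFactor G ι o, x ≠ 1 →
      pingPongHom h a o x • pingPongSet (G := G) a o' ⊆ pingPongSet a o := by
  rintro o o' hne x hx _ ⟨w, hw, rfl⟩
  have hw' : w ∉ pingPongSet a o :=
    Set.disjoint_left.1 (pingPongSet_pairwise_disjoint ha hne.symm) hw
  rcases o with _ | i
  · show (of (M := MixedFactor G) (i := true) x • w).fstIdx = some true
    exact fstIdx_of_smul_of_fstIdx_ne (M := MixedFactor G) (i := true) hx hw'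
  · have hn : Multiplicative.toAdd (MulEquiv.ulift x) ≠ 0 :=
      toAdd_eq_zero.not.2 ((MulEquiv.map_ne_one_iff MulEquiv.ulift).2 hx)
    have hs : xLetter G (a i + 1) ≠ (xLetter G (a i + 1))⁻¹ := by
      rw [xLetter_inv]; exact xLetter_injective.ne (by omega)
    exact equivPair_head_sandwich_zpow_smul (by decide : true ≠ false) hh hs hw' hn

theorem lift_pingPongHom_injective [Nonempty ι] (ha : Injective a) (hh : h ≠ 1) :
    Injective (CoprodI.lift (pingPongHom h a)) := by
  obtain ⟨i⟩ := ‹Nonempty ι›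
  have : Infinite (MultiMixedFactor G ι (some i)) :=
    inferInstanceAs (Infinite (ULift (Multiplicative ℤ)))
  refine lift_injective_of_ping_pong _ (.inr ⟨some i, ?_⟩) _ (pingPongSet_nonempty hh)
    (pingPongSet_pairwise_disjoint ha) (pingPongHom_smul_subset ha hh)
  exact (Cardinal.natCast_lt_aleph0 (n := 3)).le.trans (Cardinal.aleph0_le_mk _)

end PingPong

section Substitution

variable {G : Type u} [Group G] {ι : Type v} {h : G} {a : ι → ℕ}

variable (h a) in
def mixedSubstitution : Coprod G (FreeGroup ι) →* MixedWordGroup G :=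
  Coprod.lift Coprod.inl (FreeGroup.lift fun i =>
    xGen G ^ (a i + 1 : ℤ) * Coprod.inl h * xGen G ^ (a i + 1 : ℤ))

theorem mixedSubstitution_inl (g : G) : mixedSubstitution h a (Coprod.inl g) = Coprod.inl g :=
  Coprod.lift_apply_inl _ _ _

theorem toCoprodI_comp_mixedSubstitution :
    MixedWordGroup.toCoprodI_s5.comp (mixedSubstitution h a) =
      (CoprodI.lift (pingPongHom h a)).comp coprodFreeGroupToCoprodI := by
  ext g
  · simp only [MonoidHom.comp_apply, mixedSubstitution_inl, MixedWordGroup.toCoprodI_inl,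
      coprodFreeGroupToCoprodI_inl]
    exact (CoprodI.lift_of _ _).symm
  · have hg : pingPongHom h a (some g) (ULift.up (Multiplicative.ofAdd 1)) =
        xSandwich h (a g + 1) :=
      (pingPongHom_some_apply h a g _).trans (zpow_one _)
    simp only [MonoidHom.comp_apply, mixedSubstitution, Coprod.lift_apply_inr,
      FreeGroup.lift_apply_of, map_mul, MixedWordGroup.toCoprodI_xGen_zpow,
      MixedWordGroup.toCoprodI_inl, coprodFreeGroupToCoprodI_inr_of]
    exact ((CoprodI.lift_of _ _).trans hg).symm

theorem mixedSubstitution_injective [Nonempty ι] (ha : Injective a) (hh : h ≠ 1) :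
    Injective (mixedSubstitution h a) := by
  refine Injective.of_comp (f := MixedWordGroup.toCoprodI_s5) ?_
  rw [← MonoidHom.coe_comp, toCoprodI_comp_mixedSubstitution, MonoidHom.coe_comp]
  exact (lift_pingPongHom_injective ha hh).comp coprodFreeGroupToCoprodI_injective

end Substitution

section Evaluation

variable {G : Type*} [Group G]

theorem xGen_ne_one : xGen G ≠ 1 :=
  (map_ne_one_iff _ Coprod.inr_injective).2 (by simp)

theorem evalWord_xGen (γ : G) : evalWord γ (xGen G) = γ := by
  simp [evalWord, xGen]

theorem evalWord_comp_eq_evalMultiWord {m : ℕ} (Φ : MultiMixedWordGroup G m →* MixedWordGroup G)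
    (hΦ : ∀ g, Φ (Coprod.inl g) = Coprod.inl g) (γ : G) :
    (evalWord γ).comp Φ = evalMultiWord fun i => evalWord γ (Φ (Coprod.inr (FreeGroup.of i))) := by
  ext g
  · simp [hΦ, evalWord, evalMultiWord]
  · simp [evalMultiWord]

end Evaluation

theorem stmt5 {G : Type*} [Group G]
    (hMIF : ∀ w : MixedWordGroup G, w ≠ 1 → ∃ γ : G, evalWord γ w ≠ 1) :
    ∀ m : ℕ, 1 ≤ m → ∀ w : MultiMixedWordGroup G m, w ≠ 1 →
      ∃ γ : Fin m → G, evalMultiWord γ w ≠ 1 := by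
  intro m hm w hw
  have : Nonempty (Fin m) := ⟨⟨0, hm⟩⟩
  obtain ⟨h, hh⟩ := hMIF (xGen G) xGen_ne_one
  rw [evalWord_xGen] at hh
  set Φ := mixedSubstitution h (Fin.val : Fin m → ℕ)
  obtain ⟨γ, hγ⟩ :=
    hMIF (Φ w) ((map_ne_one_iff Φ (mixedSubstitution_injective Fin.val_injective hh)).2 hw)
  refine ⟨fun i => evalWord γ (Φ (Coprod.inr (FreeGroup.of i))), ?_⟩
  rwa [← evalWord_comp_eq_evalMultiWord Φ mixedSubstitution_inl]
end

section
/- Fix integers N ≥ 2 and t ≥ 1. Define h : ℤ[1/N] → ℝ_{≥0} by h(r) = max{k, max(0, log_N |r|)} for nonzero r, where r = a/N^k with k ≥ 0 minimal such that N^k·r ∈ ℤ, and h(0) = 0. For a nonzero polynomial f = ∑_I a_I x^I ∈ ℤ[1/N][x₁,…,x_t] (the sum over multi-indices, with |I| = I₁+⋯+I_t), define H(f) = max{ h(a_I) + |I| : a_I ≠ 0 }, and H(0) = 0. Then for all f, g ∈ ℤ[1/N][x₁,…,x_t], H(f·g) ≤ (t+2)·H(f) + H(g). -/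
/-- `ℤ[1/N]` regarded as a subring of `ℚ`: the subring generated by `ℤ` and `1/N`. -/
def ZInvN (N : ℕ) : Subring ℚ := Subring.closure {((N : ℚ))⁻¹}

/-- The minimal `k ≥ 0` such that `N^k · r ∈ ℤ` (for `r ∈ ℤ[1/N]` such a `k` exists). -/
noncomputable def denomExp (N : ℕ) (r : ℚ) : ℕ :=
  sInf {k : ℕ | ∃ a : ℤ, (N : ℚ) ^ k * r = (a : ℚ)}

/-- The height `h(r) = max{k, max(0, log_N |r|)}` for nonzero `r = a/N^k` with `k` minimal
such that `N^k·r ∈ ℤ`, and `h(0) = 0`. -/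
noncomputable def htZ (N : ℕ) (r : ℚ) : ℝ :=
  if r = 0 then 0
  else max (denomExp N r : ℝ) (max 0 (Real.logb N |(r : ℝ)|))

/-- The height `H(f) = max{ h(a_I) + |I| : a_I ≠ 0 }` of a polynomial
`f = ∑_I a_I x^I` over `ℤ[1/N]`, with `H(0) = 0`. -/
noncomputable def polyHt (N t : ℕ) (f : MvPolynomial (Fin t) ↥(ZInvN N)) : ℝ :=
  if hf : f.support.Nonempty then
    f.support.sup' hf
      (fun I => htZ N ((MvPolynomial.coeff I f : ↥(ZInvN N)) : ℚ) + ((I.sum fun _ e => e : ℕ) : ℝ))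
  else 0

/-!
Write `f = ∑ a_J x^J`, `g = ∑ b_K x^K`, so that the coefficient of `x^I` in `f g` is
`c_I = ∑_{J + K = I} a_J b_K`. Both parts of the height of `c_I` are controlled termwise:
`N^(k(a_J) + k(b_K))` clears the denominator of `a_J b_K`, and `|a_J b_K| ≤ N^(h(a_J) + h(b_K))`,
where `h(a_J) + h(b_K) ≤ H(f) + H(g) - |I|`. The denominator exponent of a sum is at most the
largest one of its terms, while the absolute value picks up a factor of at most `#supp f`, which is
`≤ (deg f + 1)^t ≤ N^(t H(f))`. Hence `h(c_I) + |I| ≤ (t + 1) H(f) + H(g)`.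
-/

open MvPolynomial Finset

def ClearsDenom (N k : ℕ) (r : ℚ) : Prop := ∃ a : ℤ, (N : ℚ) ^ k * r = a

namespace ClearsDenom

variable {N k l : ℕ} {r s : ℚ}

lemma zero (N k : ℕ) : ClearsDenom N k 0 := ⟨0, by simp⟩

lemma mono (h : ClearsDenom N k r) (hkl : k ≤ l) : ClearsDenom N l r := by
  obtain ⟨a, ha⟩ := h
  obtain ⟨m, rfl⟩ := Nat.exists_eq_add_of_le hkl
  exact ⟨N ^ m * a, by rw [pow_add, mul_comm ((N : ℚ) ^ k), mul_assoc, ha]; push_cast; rfl⟩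

lemma add (hr : ClearsDenom N k r) (hs : ClearsDenom N k s) : ClearsDenom N k (r + s) := by
  obtain ⟨a, ha⟩ := hr
  obtain ⟨b, hb⟩ := hs
  exact ⟨a + b, by rw [mul_add, ha, hb]; push_cast; rfl⟩

lemma neg (hr : ClearsDenom N k r) : ClearsDenom N k (-r) := by
  obtain ⟨a, ha⟩ := hr
  exact ⟨-a, by rw [mul_neg, ha]; push_cast; rfl⟩

lemma mul (hr : ClearsDenom N k r) (hs : ClearsDenom N l s) : ClearsDenom N (k + l) (r * s) := by
  obtain ⟨a, ha⟩ := hr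
  obtain ⟨b, hb⟩ := hs
  exact ⟨a * b, by rw [pow_add, mul_mul_mul_comm, ha, hb]; push_cast; rfl⟩

lemma sum {ι : Type*} {s : Finset ι} {r : ι → ℚ} (h : ∀ i ∈ s, ClearsDenom N k (r i)) :
    ClearsDenom N k (∑ i ∈ s, r i) :=
  Finset.sum_induction r _ (fun _ _ => add) (zero N k) h

end ClearsDenom

section DenomExp

variable {N k : ℕ} {r : ℚ}

lemma exists_clearsDenom_of_mem_ZInvN (hr : r ∈ ZInvN N) : ∃ k, ClearsDenom N k r := by
  induction hr using Subring.closure_induction with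
  | mem x hx =>
    rw [Set.mem_singleton_iff.mp hx]
    rcases eq_or_ne N 0 with rfl | hN
    · exact ⟨1, 0, by simp⟩
    · exact ⟨1, 1, by field_simp; simp⟩
  | zero => exact ⟨0, .zero N 0⟩
  | one => exact ⟨0, 1, by simp⟩
  | add x y _ _ hx hy =>
    obtain ⟨k, hk⟩ := hx
    obtain ⟨l, hl⟩ := hy
    exact ⟨max k l, (hk.mono (le_max_left k l)).add (hl.mono (le_max_right k l))⟩
  | neg x _ hx =>
    obtain ⟨k, hk⟩ := hx
    exact ⟨k, hk.neg⟩
  | mul x y _ _ hx hy =>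
    obtain ⟨k, hk⟩ := hx
    obtain ⟨l, hl⟩ := hy
    exact ⟨k + l, hk.mul hl⟩

lemma clearsDenom_denomExp (hr : r ∈ ZInvN N) : ClearsDenom N (denomExp N r) r :=
  Nat.sInf_mem (exists_clearsDenom_of_mem_ZInvN hr)

lemma denomExp_le (h : ClearsDenom N k r) : denomExp N r ≤ k :=
  Nat.sInf_le h

end DenomExp

section HtZ

variable {N : ℕ} {r s : ℚ}

lemma htZ_nonneg (N : ℕ) (r : ℚ) : 0 ≤ htZ N r := by
  unfold htZ
  split_ifs
  · exact le_rfl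
  · exact le_max_of_le_right (le_max_left _ _)

lemma denomExp_le_htZ (hr : r ≠ 0) : (denomExp N r : ℝ) ≤ htZ N r := by
  simp [htZ, hr]

lemma abs_le_rpow_htZ (hN : 1 < N) (r : ℚ) : |(r : ℝ)| ≤ (N : ℝ) ^ htZ N r := by
  have hN' : (1 : ℝ) < N := by exact_mod_cast hN
  rcases eq_or_ne r 0 with rfl | hr
  · simpa using Real.rpow_nonneg (by positivity) _
  have hpos : 0 < |(r : ℝ)| := by positivity
  calc |(r : ℝ)| = (N : ℝ) ^ Real.logb N |(r : ℝ)| :=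
        (Real.rpow_logb (by positivity) hN'.ne' hpos).symm
    _ ≤ (N : ℝ) ^ htZ N r := by
      refine Real.rpow_le_rpow_of_exponent_le hN'.le ?_
      simp only [htZ, hr, if_false]
      exact le_max_of_le_right (le_max_right _ _)

lemma htZ_le (hN : 1 < N) {B : ℝ} (hB : 0 ≤ B) (hden : (denomExp N r : ℝ) ≤ B)
    (habs : |(r : ℝ)| ≤ (N : ℝ) ^ B) : htZ N r ≤ B := by
  unfold htZ
  split_ifs with hr
  · exact hB
  have hpos : 0 < |(r : ℝ)| := by positivity
  exact max_le hden (max_le hB ((Real.logb_le_iff_le_rpow (by exact_mod_cast hN) hpos).mpr habs))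

lemma abs_mul_le_rpow_htZ_add (hN : 1 < N) (r s : ℚ) :
    |((r * s : ℚ) : ℝ)| ≤ (N : ℝ) ^ (htZ N r + htZ N s) := by
  rw [Rat.cast_mul, abs_mul, Real.rpow_add (by positivity)]
  exact mul_le_mul (abs_le_rpow_htZ hN r) (abs_le_rpow_htZ hN s) (abs_nonneg _) (by positivity)

lemma clearsDenom_floor_mul {B : ℝ} (hr : r ∈ ZInvN N) (hs : s ∈ ZInvN N) (hr0 : r ≠ 0)
    (hs0 : s ≠ 0) (h : htZ N r + htZ N s ≤ B) : ClearsDenom N ⌊B⌋₊ (r * s) := by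
  refine ((clearsDenom_denomExp hr).mul (clearsDenom_denomExp hs)).mono (Nat.le_floor ?_)
  push_cast
  linarith [denomExp_le_htZ (N := N) hr0, denomExp_le_htZ (N := N) hs0]

lemma htZ_sum_le (hN : 1 < N) {ι : Type*} {S : Finset ι} {q : ι → ℚ} {k : ℕ} {B C : ℝ}
    (hk : (k : ℝ) ≤ B) (hC : 0 ≤ C) (hcard : (#S : ℝ) ≤ (N : ℝ) ^ C)
    (hden : ∀ i ∈ S, ClearsDenom N k (q i))
    (habs : ∀ i ∈ S, |(q i : ℝ)| ≤ (N : ℝ) ^ B) :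
    htZ N (∑ i ∈ S, q i) ≤ C + B := by
  have hB : 0 ≤ B := (Nat.cast_nonneg k).trans hk
  refine htZ_le hN (by positivity) ?_ ?_
  · have : denomExp N (∑ i ∈ S, q i) ≤ k := denomExp_le (ClearsDenom.sum hden)
    have : (denomExp N (∑ i ∈ S, q i) : ℝ) ≤ k := by exact_mod_cast this
    linarith
  · calc |((∑ i ∈ S, q i : ℚ) : ℝ)| ≤ ∑ i ∈ S, |(q i : ℝ)| := by
          rw [Rat.cast_sum]; exact abs_sum_le_sum_abs _ _
      _ ≤ #S * (N : ℝ) ^ B := by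
          simpa [nsmul_eq_mul] using sum_le_card_nsmul S _ _ habs
      _ ≤ (N : ℝ) ^ C * (N : ℝ) ^ B := by gcongr
      _ = (N : ℝ) ^ (C + B) := (Real.rpow_add (by positivity) _ _).symm

end HtZ

lemma MvPolynomial.card_support_le_pow_totalDegree {R σ : Type*} [CommSemiring R] [Fintype σ]
    (f : MvPolynomial σ R) : #f.support ≤ (f.totalDegree + 1) ^ Fintype.card σ := by
  classical
  set D := f.totalDegree
  let top : σ →₀ ℕ := Finsupp.equivFunOnFinite.symm fun _ => D
  have hsub : f.support ⊆ Iic top := fun J hJ =>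
    mem_Iic.mpr fun i => (J.le_degree i).trans (le_totalDegree hJ)
  calc #f.support ≤ #(Iic top) := card_le_card hsub
    _ = (D + 1) ^ #top.support := by simp [Finsupp.card_Iic, top]
    _ ≤ (D + 1) ^ Fintype.card σ := Nat.pow_le_pow_right D.succ_pos (card_le_univ _)

lemma MvPolynomial.coeff_mul_eq_sum_filter {R σ : Type*} [CommSemiring R] [DecidableEq σ]
    (f g : MvPolynomial σ R) (I : σ →₀ ℕ) :
    coeff I (f * g) = ∑ p ∈ antidiagonal I with p.1 ∈ f.support ∧ p.2 ∈ g.support,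
      coeff p.1 f * coeff p.2 g := by
  rw [coeff_mul, sum_filter_of_ne]
  intro p _ hp
  exact ⟨mem_support_iff.mpr (left_ne_zero_of_mul hp),
    mem_support_iff.mpr (right_ne_zero_of_mul hp)⟩

section PolyHt

variable {N t : ℕ} {f g : MvPolynomial (Fin t) (ZInvN N)} {I : Fin t →₀ ℕ}

lemma htZ_add_degree_le_polyHt (hI : I ∈ f.support) :
    htZ N (coeff I f : ZInvN N) + I.degree ≤ polyHt N t f := by
  rw [polyHt, dif_pos ⟨I, hI⟩]
  exact le_sup' (fun J => htZ N (coeff J f : ZInvN N) + ((J.sum fun _ e => e : ℕ) : ℝ)) hI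

lemma polyHt_nonneg (N t : ℕ) (f : MvPolynomial (Fin t) (ZInvN N)) : 0 ≤ polyHt N t f := by
  by_cases hf : f.support.Nonempty
  · obtain ⟨I, hI⟩ := hf
    linarith [htZ_add_degree_le_polyHt hI, htZ_nonneg N (coeff I f : ZInvN N),
      (Nat.cast_nonneg I.degree : (0 : ℝ) ≤ I.degree)]
  · simp [polyHt, hf]

lemma polyHt_le {B : ℝ} (hB : 0 ≤ B)
    (h : ∀ I ∈ f.support, htZ N (coeff I f : ZInvN N) + I.degree ≤ B) :
    polyHt N t f ≤ B := by
  unfold polyHt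
  split_ifs
  · exact sup'_le _ _ h
  · exact hB

lemma totalDegree_le_polyHt (f : MvPolynomial (Fin t) (ZInvN N)) :
    (f.totalDegree : ℝ) ≤ polyHt N t f := by
  by_cases hf : f.support.Nonempty
  · obtain ⟨I, hI, hmax⟩ := exists_mem_eq_sup f.support hf fun J => J.sum fun _ e => e
    have hdeg : f.totalDegree = I.degree := hmax
    rw [hdeg]
    linarith [htZ_add_degree_le_polyHt hI, htZ_nonneg N (coeff I f : ZInvN N)]
  · simp [totalDegree, not_nonempty_iff_eq_empty.mp hf, polyHt_nonneg]

lemma card_support_le_rpow_polyHt (hN : 1 < N) (f : MvPolynomial (Fin t) (ZInvN N)) :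
    (#f.support : ℝ) ≤ (N : ℝ) ^ (t * polyHt N t f) := by
  set D := f.totalDegree
  have hcard : #f.support ≤ N ^ (D * t) := by
    calc #f.support ≤ (D + 1) ^ t := by simpa using card_support_le_pow_totalDegree f
      _ ≤ (N ^ D) ^ t := Nat.pow_le_pow_left (Nat.lt_pow_self hN) t
      _ = N ^ (D * t) := (pow_mul N D t).symm
  calc (#f.support : ℝ) ≤ (N : ℝ) ^ ((D * t : ℕ) : ℝ) := by
        rw [Real.rpow_natCast]; exact_mod_cast hcard
    _ ≤ (N : ℝ) ^ (t * polyHt N t f) := by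
      refine Real.rpow_le_rpow_of_exponent_le (by exact_mod_cast hN.le) ?_
      rw [Nat.cast_mul, mul_comm]
      exact mul_le_mul_of_nonneg_left (totalDegree_le_polyHt f) (Nat.cast_nonneg t)

lemma htZ_coeff_add_htZ_coeff_le {J K : Fin t →₀ ℕ} (hJ : J ∈ f.support)
    (hK : K ∈ g.support) :
    htZ N (coeff J f : ZInvN N) + htZ N (coeff K g : ZInvN N) ≤
      polyHt N t f + polyHt N t g - (J + K).degree := by
  rw [map_add, Nat.cast_add]
  linarith [htZ_add_degree_le_polyHt hJ, htZ_add_degree_le_polyHt hK]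

lemma htZ_coeff_mul_add_degree_le (hN : 1 < N) (hI : I ∈ (f * g).support) :
    htZ N (coeff I (f * g) : ZInvN N) + I.degree ≤ (t + 1) * polyHt N t f + polyHt N t g := by
  classical
  set S := {p ∈ antidiagonal I | p.1 ∈ f.support ∧ p.2 ∈ g.support}
  set B := polyHt N t f + polyHt N t g - I.degree
  have hc : ((coeff I (f * g) : ZInvN N) : ℚ) =
      ∑ p ∈ S, ((coeff p.1 f : ZInvN N) : ℚ) * ((coeff p.2 g : ZInvN N) : ℚ) := by
    rw [coeff_mul_eq_sum_filter]
    push_cast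
    rfl
  have hmemS : ∀ p ∈ S, p.1 + p.2 = I ∧ p.1 ∈ f.support ∧ p.2 ∈ g.support :=
    fun p hp => by simpa [S] using hp
  have hpair : ∀ p ∈ S, htZ N (coeff p.1 f : ZInvN N) + htZ N (coeff p.2 g : ZInvN N) ≤ B :=
    fun p hp => by
      obtain ⟨hpI, hf, hg⟩ := hmemS p hp
      simpa only [hpI] using htZ_coeff_add_htZ_coeff_le hf hg
  have hB : 0 ≤ B := by
    obtain ⟨p, hp⟩ : S.Nonempty :=
      nonempty_of_sum_ne_zero (by rw [← hc]; simpa using mem_support_iff.mp hI)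
    linarith [hpair p hp, htZ_nonneg N (coeff p.1 f : ZInvN N),
      htZ_nonneg N (coeff p.2 g : ZInvN N)]
  have hcardS : #S ≤ #f.support := card_le_card_of_injOn Prod.fst
    (fun p hp => (hmemS p hp).2.1) fun p hp q hq hpq => Prod.ext hpq <|
      add_left_cancel (((hmemS p hp).1.trans (hmemS q hq).1.symm).trans (by rw [hpq]))
  have hsum : htZ N (∑ p ∈ S, ((coeff p.1 f : ZInvN N) : ℚ) * ((coeff p.2 g : ZInvN N) : ℚ))
      ≤ t * polyHt N t f + B := by
    refine htZ_sum_le hN (Nat.floor_le hB)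
      (mul_nonneg (Nat.cast_nonneg t) (polyHt_nonneg N t f))
      ((Nat.cast_le.mpr hcardS).trans (card_support_le_rpow_polyHt hN f)) (fun p hp => ?_)
      fun p hp => (abs_mul_le_rpow_htZ_add hN _ _).trans
        (Real.rpow_le_rpow_of_exponent_le (by exact_mod_cast hN.le) (hpair p hp))
    obtain ⟨-, hf, hg⟩ := hmemS p hp
    exact clearsDenom_floor_mul (coeff p.1 f).2 (coeff p.2 g).2
      (by simpa using mem_support_iff.mp hf) (by simpa using mem_support_iff.mp hg) (hpair p hp)
  rw [hc]
  linarith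

lemma polyHt_mul_le (hN : 1 < N) (f g : MvPolynomial (Fin t) (ZInvN N)) :
    polyHt N t (f * g) ≤ (t + 1) * polyHt N t f + polyHt N t g := by
  have := polyHt_nonneg N t f
  have := polyHt_nonneg N t g
  exact polyHt_le (by positivity) fun I hI => htZ_coeff_mul_add_degree_le hN hI

end PolyHt

theorem stmt13_general (N t : ℕ) (hN : 2 ≤ N)
    (f g : MvPolynomial (Fin t) ↥(ZInvN N)) :
    polyHt N t (f * g) ≤ (t + 2) * polyHt N t f + polyHt N t g := by
  calc polyHt N t (f * g) ≤ (t + 1) * polyHt N t f + polyHt N t g := polyHt_mul_le hN f g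
    _ ≤ (t + 2) * polyHt N t f + polyHt N t g := by linarith [polyHt_nonneg N t f]

theorem stmt13 (N t : ℕ) (hN : 2 ≤ N) (ht : 1 ≤ t)
    (f g : MvPolynomial (Fin t) ↥(ZInvN N)) :
    polyHt N t (f * g) ≤ (t + 2) * polyHt N t f + polyHt N t g :=
  stmt13_general N t hN f g
end
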